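/- Let G and H be connected graphs and R ⊆ V(G □ H). If the projection π_G(R) is a general position set of G and |π_G(R)| = |R| (i.e., the projection to G is injective on R), then R is a general position set of G □ H. -/

import Mathlib

open SimpleGraph

/-- The interval `I[u,v]`: vertices lying on some `u,v`-geodesic. -/
def gpInterval {V : Type*} (G : SimpleGraph V) (u v : V) : Set V :=
  {x | G.dist u x + G.dist x v = G.dist u v}

/-- `S` is a general position set: no three distinct vertices of `S` lie on a common geodesic. -/
def IsGPSet {V : Type*} (G : SimpleGraph V) (S : Set V) : Prop :=
  ∀ u ∈ S, ∀ v ∈ S, ∀ w ∈ S, u ≠ v → u ≠ w → v ≠ w → w ∉ gpInterval G u v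

private lemma walk_proj {V W : Type*} {G : SimpleGraph V} {H : SimpleGraph W}
    {x y : V × W} (p : (G □ H).Walk x y) :
    ∃ (pG : G.Walk x.1 y.1) (pH : H.Walk x.2 y.2),
      pG.length + pH.length ≤ p.length := by
  induction p with
  | nil => exact ⟨SimpleGraph.Walk.nil, SimpleGraph.Walk.nil, le_refl _⟩
  | cons h p ih =>
    obtain ⟨pG, pH, hle⟩ := ih
    rcases h with ⟨hadj, heq⟩ | ⟨hadj, heq⟩
    · refine ⟨SimpleGraph.Walk.cons hadj pG, pH.copy heq.symm rfl, ?_⟩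
      simp only [SimpleGraph.Walk.length_cons, SimpleGraph.Walk.length_copy]
      change _ ≤ p.length + 1
      omega
    · refine ⟨pG.copy heq.symm rfl, SimpleGraph.Walk.cons hadj pH, ?_⟩
      simp only [SimpleGraph.Walk.length_cons, SimpleGraph.Walk.length_copy]
      change _ ≤ p.length + 1
      omega

private lemma boxProd_dist {V W : Type*} {G : SimpleGraph V} {H : SimpleGraph W}
    (hG : G.Connected) (hH : H.Connected) (x y : V × W) :
    (G □ H).dist x y = G.dist x.1 y.1 + H.dist x.2 y.2 := by
  apply le_antisymm
  · obtain ⟨pG, hpG⟩ := (hG.preconnected x.1 y.1).exists_walk_length_eq_dist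
    obtain ⟨pH, hpH⟩ := (hH.preconnected x.2 y.2).exists_walk_length_eq_dist
    have : ((pG.boxProdLeft H x.2).append (SimpleGraph.Walk.boxProdRight G y.1 pH) :
        (G □ H).Walk (x.1, x.2) (y.1, y.2)).length = G.dist x.1 y.1 + H.dist x.2 y.2 := by
      rw [SimpleGraph.Walk.length_append,
        show (pG.boxProdLeft H x.2).length = pG.length from SimpleGraph.Walk.length_map _ _,
        show (SimpleGraph.Walk.boxProdRight G y.1 pH).length = pH.length from
          SimpleGraph.Walk.length_map _ _, hpG, hpH]
    calc (G □ H).dist x y ≤ _ := SimpleGraph.dist_le _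
      _ = _ := this
  · obtain ⟨p, hp⟩ := ((hG.boxProd hH).preconnected x y).exists_walk_length_eq_dist
    obtain ⟨pG, pH, hle⟩ := walk_proj p
    calc G.dist x.1 y.1 + H.dist x.2 y.2 ≤ pG.length + pH.length :=
          Nat.add_le_add (SimpleGraph.dist_le _) (SimpleGraph.dist_le _)
      _ ≤ p.length := hle
      _ = _ := hp

theorem stmt_6 {V W : Type*} [Fintype V] [Fintype W] (G : SimpleGraph V) (H : SimpleGraph W)
    (hG : G.Connected) (hH : H.Connected) (R : Set (V × W))
    (h2 : IsGPSet G (Prod.fst '' R)) (hcard : (Prod.fst '' R).ncard = R.ncard) :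
    IsGPSet (G □ H) R := by
  have hfin : R.Finite := Set.toFinite R
  have hinj : Set.InjOn Prod.fst R := by
    exact Set.injOn_of_ncard_image_eq hcard hfin
  intro u hu v hv w hw huv huw hvw hmem
  have h1 : u.1 ≠ v.1 := fun h => huv (hinj hu hv h)
  have h1' : u.1 ≠ w.1 := fun h => huw (hinj hu hw h)
  have h2' : v.1 ≠ w.1 := fun h => hvw (hinj hv hw h)
  simp only [gpInterval, Set.mem_setOf_eq, boxProd_dist hG hH] at hmem
  have tG : G.dist u.1 v.1 ≤ G.dist u.1 w.1 + G.dist w.1 v.1 := hG.dist_triangle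
  have tH : H.dist u.2 v.2 ≤ H.dist u.2 w.2 + H.dist w.2 v.2 := hH.dist_triangle
  have hGeq : G.dist u.1 w.1 + G.dist w.1 v.1 = G.dist u.1 v.1 := by omega
  exact h2 u.1 ⟨u, hu, rfl⟩ v.1 ⟨v, hv, rfl⟩ w.1 ⟨w, hw, rfl⟩ h1 h1' h2' hGeq
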